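/- The quantile function of the standard normal distribution satisfies, as $s \to 0^+$: $\Phi^{-1}(1-s) = (2\log(1/s))^{1/2} - \frac{\log(4\pi) + \log\log(1/s)}{2(2\log(1/s))^{1/2}} + O\left((\log\log(1/s))^2 (\log(1/s))^{-1/2}\right)$. -/

import Mathlib

open MeasureTheory ProbabilityTheory Filter Asymptotics
open Real Set

set_option linter.unusedVariables false

noncomputable def qx0 (L : ℝ) : ℝ :=
  Real.sqrt (2*L) - (Real.log (4*π) + Real.log L)/(2*Real.sqrt (2*L))
noncomputable def qE (L : ℝ) : ℝ := (Real.log L)^2 / Real.sqrt L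


noncomputable def nphi (x : ℝ) : ℝ := (Real.sqrt (2 * π))⁻¹ * Real.exp (-x^2/2)

lemma nphi_pos (x : ℝ) : 0 < nphi x := by unfold nphi; positivity

lemma gaussianPDFReal_eq (x : ℝ) : gaussianPDFReal 0 1 x = nphi x := by
  simp [gaussianPDFReal, nphi]

lemma hasDerivAt_nphi (x : ℝ) : HasDerivAt nphi (-x * nphi x) x := by
  unfold nphi
  have h1 : HasDerivAt (fun t : ℝ => -t^2/2) (-x) x := by
    have := ((hasDerivAt_pow 2 x).neg).div_const 2
    refine this.congr_deriv ?_; ring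
  have := (h1.exp).const_mul (Real.sqrt (2 * π))⁻¹
  refine this.congr_deriv ?_; ring

lemma continuous_nphi : Continuous nphi := by
  unfold nphi; continuity

lemma tendsto_nphi_atTop : Tendsto nphi atTop (nhds 0) := by
  unfold nphi
  rw [show (0:ℝ) = (Real.sqrt (2*π))⁻¹ * 0 by ring]
  apply Tendsto.const_mul
  apply Real.tendsto_exp_atBot.comp
  have h : Tendsto (fun x : ℝ => x^2/2) atTop atTop :=
    (tendsto_pow_atTop (by norm_num)).atTop_div_const (by norm_num)
  have := tendsto_neg_atTop_atBot.comp h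
  convert this using 2 with x; simp; ring

lemma integrable_nphi_Ioi (x : ℝ) : IntegrableOn nphi (Ioi x) := by
  have h := integrable_gaussianPDFReal 0 1
  rw [funext gaussianPDFReal_eq] at h
  exact h.integrableOn

-- tail formula
lemma tail_eq (x : ℝ) :
    1 - cdf (gaussianReal 0 1) x = ∫ t in Ioi x, nphi t := by
  have h1 : cdf (gaussianReal 0 1) x = ((gaussianReal 0 1) (Iic x)).toReal := cdf_eq_real _ _
  have h2 : (gaussianReal 0 1) (Ioi x) = ENNReal.ofReal (∫ t in Ioi x, gaussianPDFReal 0 1 t) :=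
    gaussianReal_apply_eq_integral 0 one_ne_zero _
  have h3 : (gaussianReal 0 1) (Iic x) + (gaussianReal 0 1) (Ioi x) = 1 := by
    rw [← measure_union (Set.Iic_disjoint_Ioi le_rfl) measurableSet_Ioi, Set.Iic_union_Ioi,
      measure_univ]
  have hint : (0:ℝ) ≤ ∫ t in Ioi x, gaussianPDFReal 0 1 t :=
    setIntegral_nonneg measurableSet_Ioi fun t _ => gaussianPDFReal_nonneg 0 1 t
  have h4 : ((gaussianReal 0 1) (Ioi x)).toReal = ∫ t in Ioi x, gaussianPDFReal 0 1 t := by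
    rw [h2, ENNReal.toReal_ofReal hint]
  have h5 : ((gaussianReal 0 1) (Iic x)).toReal + ((gaussianReal 0 1) (Ioi x)).toReal = 1 := by
    rw [← ENNReal.toReal_add (measure_ne_top _ _) (measure_ne_top _ _), h3]; simp
  have : (∫ t in Ioi x, gaussianPDFReal 0 1 t) = ∫ t in Ioi x, nphi t := by
    simp_rw [gaussianPDFReal_eq]
  rw [h1, ← this, ← h4]; linarith



lemma tail_upper {x : ℝ} (hx : 0 < x) : ∫ t in Ioi x, nphi t ≤ nphi x / x := by
  set g : ℝ → ℝ := fun t => -nphi t * t⁻¹ with hg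
  set g' : ℝ → ℝ := fun t => (1 + (t^2)⁻¹) * nphi t with hg'
  have hderiv : ∀ t ∈ Ici x, HasDerivAt g (g' t) t := by
    intro t ht
    have ht0 : t ≠ 0 := ne_of_gt (lt_of_lt_of_le hx ht)
    have h1 := ((hasDerivAt_nphi t).neg).mul (hasDerivAt_inv ht0)
    refine h1.congr_deriv ?_
    simp only [hg', Pi.neg_apply, Pi.sub_apply, Pi.inv_apply]
    field_simp
  have hpos : ∀ t ∈ Ioi x, 0 ≤ g' t := by
    intro t _
    have h : (0:ℝ) ≤ (1 + (t^2)⁻¹) := by positivity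
    exact mul_nonneg h (nphi_pos t).le
  have hten : Tendsto g atTop (nhds 0) := by
    rw [show (0:ℝ) = -0 * 0 by ring]
    exact (tendsto_nphi_atTop.neg).mul tendsto_inv_atTop_zero
  have hint := integrableOn_Ioi_deriv_of_nonneg' hderiv hpos hten
  have heq := integral_Ioi_of_hasDerivAt_of_nonneg' hderiv hpos hten
  have hmono : ∫ t in Ioi x, nphi t ≤ ∫ t in Ioi x, g' t := by
    apply setIntegral_mono_on (integrable_nphi_Ioi x) hint measurableSet_Ioi
    intro t _
    show nphi t ≤ (1 + (t^2)⁻¹) * nphi t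
    nlinarith [nphi_pos t, inv_nonneg.2 (sq_nonneg t)]
  have hgx : (0:ℝ) - g x = nphi x / x := by
    simp only [hg]; rw [div_eq_mul_inv]; ring
  rw [heq, hgx] at hmono
  exact hmono

lemma tail_lower {x : ℝ} (hx : 2 ≤ x) : nphi x / (2*x) ≤ ∫ t in Ioi x, nphi t := by
  set g : ℝ → ℝ := fun t => -((t⁻¹ - (t^3)⁻¹) * nphi t) with hg
  set g' : ℝ → ℝ := fun t => (1 - 3*(t^4)⁻¹) * nphi t with hg'
  have hx0 : (0:ℝ) < x := by linarith
  have hderiv : ∀ t ∈ Ici x, HasDerivAt g (g' t) t := by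
    intro t ht
    have htpos : (0:ℝ) < t := lt_of_lt_of_le hx0 ht
    have ht0 : t ≠ 0 := ne_of_gt htpos
    have h1 := (hasDerivAt_pow 3 t).inv (pow_ne_zero 3 ht0)
    have h2 := (((hasDerivAt_inv ht0).sub h1).mul (hasDerivAt_nphi t)).neg
    refine h2.congr_deriv ?_
    simp only [hg', Pi.neg_apply, Pi.sub_apply, Pi.inv_apply]
    field_simp
    ring
  have hpos : ∀ t ∈ Ioi x, 0 ≤ g' t := by
    intro t ht
    have ht2 : (2:ℝ) ≤ t := le_trans hx (le_of_lt ht)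
    have h4 : (16:ℝ) ≤ t^4 := by
      have := pow_le_pow_left₀ (by norm_num : (0:ℝ) ≤ 2) ht2 4
      norm_num at this; linarith
    have h5 : 3*(t^4)⁻¹ ≤ 1 := by
      rw [mul_inv_le_iff₀ (by linarith)]
      linarith
    exact mul_nonneg (by linarith) (nphi_pos t).le
  have hten : Tendsto g atTop (nhds 0) := by
    rw [show (0:ℝ) = -(0 * 0) by ring]
    apply Tendsto.neg
    apply Tendsto.mul ?_ tendsto_nphi_atTop
    rw [show (0:ℝ) = 0 - 0 by ring]
    exact tendsto_inv_atTop_zero.sub (tendsto_inv_atTop_zero.comp (tendsto_pow_atTop (by norm_num)))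
  have hint := integrableOn_Ioi_deriv_of_nonneg' hderiv hpos hten
  have heq := integral_Ioi_of_hasDerivAt_of_nonneg' hderiv hpos hten
  have hmono : ∫ t in Ioi x, g' t ≤ ∫ t in Ioi x, nphi t := by
    apply setIntegral_mono_on hint (integrable_nphi_Ioi x) measurableSet_Ioi
    intro t ht
    show (1 - 3*(t^4)⁻¹) * nphi t ≤ nphi t
    have h4 : (0:ℝ) < t^4 := by
      have : (0:ℝ) < t := lt_of_lt_of_le hx0 (le_of_lt ht)
      positivity
    nlinarith [nphi_pos t, mul_nonneg (inv_nonneg.2 h4.le) (nphi_pos t).le]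
  have hgx : (0:ℝ) - g x = (x⁻¹ - (x^3)⁻¹) * nphi x := by simp [hg]
  rw [heq, hgx] at hmono
  have key : nphi x / (2*x) ≤ (x⁻¹ - (x^3)⁻¹) * nphi x := by
    have h2 : (x^3)⁻¹ ≤ (2*x)⁻¹ := by
      apply inv_anti₀ (by positivity)
      have hsq : (4:ℝ) ≤ x*x := by nlinarith
      nlinarith
    have h3 : (2*x)⁻¹ ≤ x⁻¹ - (x^3)⁻¹ := by
      have hxx : x⁻¹ = (2*x)⁻¹ + (2*x)⁻¹ := by field_simp; ring
      linarith
    calc nphi x / (2*x) = (2*x)⁻¹ * nphi x := by rw [div_eq_mul_inv]; ring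
    _ ≤ (x⁻¹ - (x^3)⁻¹) * nphi x := mul_le_mul_of_nonneg_right h3 (nphi_pos x).le
  linarith



lemma exp_half_log {a : ℝ} (ha : 0 < a) : Real.exp (Real.log a / 2) = Real.sqrt a := by
  rw [Real.sqrt_eq_rpow, Real.rpow_def_of_pos ha]
  ring_nf

lemma sqrt_2L (L : ℝ) (hL : 0 ≤ L) : Real.sqrt (2*L) = Real.sqrt 2 * Real.sqrt L :=
  Real.sqrt_mul (by norm_num) L

-- eventual facts
lemma ev_log_le : ∀ᶠ L : ℝ in atTop, Real.log L ≤ (1/2) * Real.sqrt L := by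
  have h := (isLittleO_log_rpow_atTop (by norm_num : (0:ℝ) < 1/2)).bound (c := 1/2) (by norm_num)
  filter_upwards [h, eventually_ge_atTop (1:ℝ)] with L hb hL1
  have h0 : (0:ℝ) ≤ L := by linarith
  have : ‖Real.log L‖ = Real.log L := by
    rw [Real.norm_eq_abs, abs_of_nonneg (Real.log_nonneg hL1)]
  rw [this, Real.norm_eq_abs, abs_of_nonneg (Real.rpow_nonneg h0 _), ← Real.sqrt_eq_rpow] at hb
  exact hb

lemma ev_qE : ∀ᶠ L : ℝ in atTop, 0 ≤ qE L ∧ qE L ≤ 1/2 := by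
  have h := (isLittleO_log_rpow_rpow_atTop 2 (by norm_num : (0:ℝ) < 1/2)).bound
    (c := 1/2) (by norm_num)
  filter_upwards [h, eventually_ge_atTop (1:ℝ)] with L hb hL1
  have h0 : (0:ℝ) ≤ L := by linarith
  have hlog : (0:ℝ) ≤ Real.log L := Real.log_nonneg hL1
  have hE0 : 0 ≤ qE L := by unfold qE; positivity
  refine ⟨hE0, ?_⟩
  have h2 : L ^ ((1:ℝ)/2) = Real.sqrt L := (Real.sqrt_eq_rpow L).symm
  have h1 : Real.log L ^ (2:ℝ) = Real.log L ^ (2:ℕ) := by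
    rw [show ((2:ℝ)) = ((2:ℕ):ℝ) by norm_num, Real.rpow_natCast]
  rw [Real.norm_eq_abs, Real.norm_eq_abs, h1, h2, abs_of_nonneg (by positivity),
    abs_of_nonneg (Real.sqrt_nonneg L)] at hb
  have hsL : 0 < Real.sqrt L := Real.sqrt_pos.2 (by linarith)
  unfold qE
  rw [div_le_iff₀ hsL]
  calc Real.log L ^ 2 ≤ 1/2 * Real.sqrt L := by push_cast at hb; linarith
  _ = 1/2 * Real.sqrt L := rfl

lemma ev_explog : ∀ᶠ L : ℝ in atTop,
    Real.exp (-(Real.sqrt 2 * (Real.log L)^2)) ≤ 1/2 ∧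
    2 < Real.exp (Real.sqrt 2 * (Real.log L)^2 - 1/2) := by
  have hpow : Tendsto (fun L : ℝ => Real.sqrt 2 * (Real.log L)^2) atTop atTop := by
    apply Tendsto.const_mul_atTop (by positivity : (0:ℝ) < Real.sqrt 2)
    exact (tendsto_pow_atTop (by norm_num : 2 ≠ 0)).comp Real.tendsto_log_atTop
  have ha : ∀ᶠ L : ℝ in atTop, Real.exp (-(Real.sqrt 2 * (Real.log L)^2)) ≤ 1/2 := by
    have h := Real.tendsto_exp_atBot.comp (tendsto_neg_atTop_atBot.comp hpow)
    filter_upwards [h.eventually (eventually_le_nhds (by norm_num : (0:ℝ) < 1/2))] with L hL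
    exact hL
  have hb : ∀ᶠ L : ℝ in atTop, 2 < Real.exp (Real.sqrt 2 * (Real.log L)^2 - 1/2) := by
    have h := Real.tendsto_exp_atTop.comp (tendsto_atTop_add_const_right _ (-(1/2)) hpow)
    filter_upwards [h.eventually_gt_atTop 2] with L hL
    simpa [Function.comp, sub_eq_add_neg] using hL
  exact ha.and hb

lemma one_le_sqrt_two : (1:ℝ) ≤ Real.sqrt 2 := by
  rw [show (1:ℝ) = Real.sqrt 1 from (Real.sqrt_one).symm]
  exact Real.sqrt_le_sqrt (by norm_num)

set_option maxHeartbeats 1000000 in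
lemma key_bounds : ∀ᶠ L : ℝ in atTop,
    0 ≤ qE L ∧ 0 < qx0 L + qE L ∧ 2 ≤ qx0 L - qE L ∧
    nphi (qx0 L + qE L) / (qx0 L + qE L) ≤ Real.exp (-L) ∧
    Real.exp (-L) < nphi (qx0 L - qE L) / (2*(qx0 L - qE L)) := by
  filter_upwards [ev_log_le, ev_qE, ev_explog, eventually_ge_atTop (4096:ℝ)]
    with L hlog hE hexp hL
  have hL1 : (1:ℝ) ≤ L := by linarith
  have hL0 : (0:ℝ) < L := by linarith
  have hsL64 : (64:ℝ) ≤ Real.sqrt L := by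
    rw [show (64:ℝ) = Real.sqrt (64^2) from (Real.sqrt_sq (by norm_num)).symm]
    exact Real.sqrt_le_sqrt (by nlinarith)
  have hsLpos : (0:ℝ) < Real.sqrt L := by linarith
  obtain ⟨S, hSdef⟩ : ∃ t, t = Real.sqrt (2*L) := ⟨_, rfl⟩
  obtain ⟨b, hbdef⟩ : ∃ t, t = Real.log (4*π) + Real.log L := ⟨_, rfl⟩
  obtain ⟨c, hcdef⟩ : ∃ t, t = b/(2*S) := ⟨_, rfl⟩
  obtain ⟨e, hedef⟩ : ∃ t, t = qE L := ⟨_, rfl⟩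
  have hx0E : qx0 L = S - c := by
    rw [hcdef, hbdef, hSdef]; rfl
  have he0 : 0 ≤ e := hedef ▸ hE.1
  have he : e ≤ 1/2 := hedef ▸ hE.2
  have hS_eq : S = Real.sqrt 2 * Real.sqrt L := by rw [hSdef]; exact sqrt_2L L hL0.le
  have hS2 : S^2 = 2*L := by rw [hSdef]; exact Real.sq_sqrt (by linarith)
  have hS64 : (64:ℝ) ≤ S := by
    rw [hS_eq]; nlinarith [one_le_sqrt_two]
  have hSpos : (0:ℝ) < S := by linarith
  have hb0 : 0 ≤ b := by
    rw [hbdef]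
    have h1 : (0:ℝ) ≤ Real.log (4*π) := Real.log_nonneg (by nlinarith [Real.pi_gt_three])
    have h2 : (0:ℝ) ≤ Real.log L := Real.log_nonneg hL1
    linarith
  have hb_le : b ≤ S := by
    have h1 : Real.log (4*π) ≤ 4*π - 1 := Real.log_le_sub_one_of_pos (by positivity)
    have h2 : (4:ℝ)*π ≤ 16 := by nlinarith [Real.pi_le_four]
    have h3 : Real.sqrt L ≤ S := by rw [hS_eq]; nlinarith [one_le_sqrt_two]
    have h4 : b ≤ 16 + Real.log L := by rw [hbdef]; linarith
    linarith
  have hc0 : 0 ≤ c := hcdef ▸ div_nonneg hb0 (by linarith)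
  have hc : c ≤ 1/2 := by
    rw [hcdef, div_le_iff₀ (by linarith : (0:ℝ) < 2*S)]
    linarith
  have hSc : 2 * S * c = b := by
    rw [hcdef]; field_simp
  have hSe : S * e = Real.sqrt 2 * (Real.log L)^2 := by
    rw [hedef]; unfold qE
    rw [hS_eq]; field_simp
  have hexpb : Real.exp (S * c) = Real.sqrt (2*π) * S := by
    have h1 : S * c = b/2 := by linarith [hSc]
    have h2 : Real.exp (b/2) = Real.sqrt (4*π) * Real.sqrt L := by
      rw [hbdef, show (Real.log (4*π) + Real.log L)/2
          = Real.log (4*π)/2 + Real.log L/2 by ring, Real.exp_add,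
        exp_half_log (by positivity), exp_half_log hL0]
    have h3 : Real.sqrt (4*π) = Real.sqrt (2*π) * Real.sqrt 2 := by
      rw [← Real.sqrt_mul (by positivity)]
      congr 1; ring
    rw [h1, h2, h3, hS_eq]; ring
  have hq_pos : (0:ℝ) < qx0 L + e := by rw [hx0E]; linarith
  have hq2 : (2:ℝ) ≤ qx0 L - e := by rw [hx0E]; linarith
  have hsqpi : (0:ℝ) < Real.sqrt (2*π) := Real.sqrt_pos.2 (by positivity)
  rw [← hedef]
  refine ⟨he0, hq_pos, hq2, ?_, ?_⟩
  · -- upper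
    rw [hx0E]
    obtain ⟨x, hxdef⟩ : ∃ t, t = S - c + e := ⟨_, rfl⟩
    rw [← hxdef]
    have hxpos : (0:ℝ) < x := by rw [hxdef]; linarith
    have hLx : -x^2/2 = -L + S*c + (-(S*e)) + (-((c-e)^2/2)) := by
      rw [hxdef]; linear_combination (-(1:ℝ)/2) * hS2
    have e1 : Real.exp (-x^2/2)
        = Real.exp (-L) * (Real.sqrt (2*π) * S) * Real.exp (-(S*e)) * Real.exp (-((c-e)^2/2)) := by
      rw [← hexpb, ← Real.exp_add, ← Real.exp_add, ← Real.exp_add, hLx]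
    have e2 : Real.exp (-(S*e)) ≤ 1/2 := by rw [hSe]; exact hexp.1
    have e3 : Real.exp (-((c-e)^2/2)) ≤ 1 :=
      Real.exp_le_one_iff.2 (by nlinarith [sq_nonneg (c-e)])
    have hA : (0:ℝ) < Real.exp (-L) * (Real.sqrt (2*π) * S) := by positivity
    have e4 : Real.exp (-x^2/2) ≤ Real.exp (-L) * (Real.sqrt (2*π) * S) * (1/2) := by
      rw [e1]
      have h5 := mul_le_mul (mul_le_mul_of_nonneg_left e2 hA.le) e3
        (Real.exp_pos _).le (by positivity)
      simpa using h5
    rw [div_le_iff₀ hxpos]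
    have hS2x : S ≤ 2 * x := by rw [hxdef]; linarith
    have h6 : nphi x ≤ (Real.sqrt (2*π))⁻¹ * (Real.exp (-L) * (Real.sqrt (2*π) * S) * (1/2)) := by
      unfold nphi
      exact mul_le_mul_of_nonneg_left e4 (by positivity)
    have h7 : (Real.sqrt (2*π))⁻¹ * (Real.exp (-L) * (Real.sqrt (2*π) * S) * (1/2))
        = Real.exp (-L) * (S/2) := by field_simp
    have h8 : Real.exp (-L) * (S/2) ≤ Real.exp (-L) * x :=
      mul_le_mul_of_nonneg_left (by linarith) (Real.exp_pos (-L)).le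
    rw [h7] at h6
    linarith
  · -- lower
    rw [hx0E]
    obtain ⟨x, hxdef⟩ : ∃ t, t = S - c - e := ⟨_, rfl⟩
    rw [← hxdef]
    have hx2 : (2:ℝ) ≤ x := by rw [hxdef]; linarith
    have hxS : x ≤ S := by rw [hxdef]; linarith
    have hLx : -x^2/2 = -L + S*c + (S*e - (c+e)^2/2) := by
      rw [hxdef]; linear_combination (-(1:ℝ)/2) * hS2
    have e1 : Real.exp (-x^2/2)
        = Real.exp (-L) * (Real.sqrt (2*π) * S) * Real.exp (S*e - (c+e)^2/2) := by
      rw [← hexpb, ← Real.exp_add, ← Real.exp_add, hLx]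
    have e2 : 2 < Real.exp (S*e - (c+e)^2/2) := by
      refine lt_of_lt_of_le hexp.2 (Real.exp_le_exp.2 ?_)
      rw [hSe]
      nlinarith
    rw [lt_div_iff₀ (by linarith : (0:ℝ) < 2*x)]
    have key : nphi x = Real.exp (-L) * S * Real.exp (S*e - (c+e)^2/2) := by
      unfold nphi
      rw [e1]; field_simp
    rw [key]
    have hexL := Real.exp_pos (-L)
    nlinarith [mul_pos (mul_pos hexL (by linarith : (0:ℝ) < S))
      (by linarith : (0:ℝ) < Real.exp (S*e - (c+e)^2/2) - 2)]




theorem normal_quantile_expansion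
    (Phinv : ℝ → ℝ)
    (hPhinv : ∀ u, Phinv u = sInf {x | u ≤ cdf (gaussianReal 0 1) x}) :
    (fun s : ℝ => Phinv (1 - s) -
        (Real.sqrt (2 * Real.log (1 / s)) -
          (Real.log (4 * Real.pi) + Real.log (Real.log (1 / s))) /
            (2 * Real.sqrt (2 * Real.log (1 / s)))))
      =O[nhdsWithin 0 (Set.Ioi 0)]
      (fun s : ℝ => (Real.log (Real.log (1 / s))) ^ 2 / Real.sqrt (Real.log (1 / s))) := by
  rw [isBigO_iff]
  refine ⟨1, ?_⟩
  have hLtend : Tendsto (fun s : ℝ => Real.log (1/s)) (nhdsWithin 0 (Set.Ioi 0)) atTop := by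
    have h2 : Tendsto (fun s : ℝ => -Real.log s) (nhdsWithin 0 (Set.Ioi 0)) atTop :=
      tendsto_neg_atBot_atTop.comp Real.tendsto_log_nhdsGT_zero
    refine h2.congr fun s => ?_
    rw [one_div, Real.log_inv]
  filter_upwards [hLtend.eventually key_bounds, self_mem_nhdsWithin] with s hkey hs
  have hs0 : (0:ℝ) < s := hs
  obtain ⟨he0, hpos, h2, hup, hlow⟩ := hkey
  have hexpL : Real.exp (-Real.log (1/s)) = s := by
    rw [one_div, Real.log_inv, neg_neg, Real.exp_log hs0]
  rw [hexpL] at hup hlow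
  obtain ⟨L, hLdef⟩ : ∃ t, t = Real.log (1/s) := ⟨_, rfl⟩
  rw [← hLdef] at he0 hpos h2 hup hlow
  have hΦup : 1 - s ≤ cdf (gaussianReal 0 1) (qx0 L + qE L) := by
    have := (tail_eq (qx0 L + qE L)) ▸ (tail_upper hpos)
    linarith
  have hΦlow : cdf (gaussianReal 0 1) (qx0 L - qE L) < 1 - s := by
    have h3 := (tail_eq (qx0 L - qE L)) ▸ (tail_lower h2)
    linarith
  obtain ⟨T, hTdef⟩ : ∃ t, t = {x : ℝ | 1 - s ≤ cdf (gaussianReal 0 1) x} := ⟨_, rfl⟩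
  have hmem : qx0 L + qE L ∈ T := by rw [hTdef]; exact hΦup
  have hlb : ∀ y ∈ T, qx0 L - qE L ≤ y := by
    intro y hy
    rw [hTdef] at hy
    by_contra hcon
    push_neg at hcon
    have := (cdf (gaussianReal 0 1)).mono hcon.le
    have hy' : (1:ℝ) - s ≤ cdf (gaussianReal 0 1) y := hy
    linarith
  have hiA : Phinv (1-s) ≤ qx0 L + qE L := by
    rw [hPhinv, ← hTdef]
    exact csInf_le ⟨qx0 L - qE L, hlb⟩ hmem
  have hiB : qx0 L - qE L ≤ Phinv (1-s) := by
    rw [hPhinv, ← hTdef]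
    exact le_csInf ⟨_, hmem⟩ hlb
  have hgoal : |Phinv (1-s) - qx0 L| ≤ qE L := abs_le.2 ⟨by linarith, by linarith⟩
  have hx0show : Real.sqrt (2 * Real.log (1 / s)) -
      (Real.log (4 * Real.pi) + Real.log (Real.log (1 / s))) /
        (2 * Real.sqrt (2 * Real.log (1 / s))) = qx0 L := by rw [hLdef]; rfl
  have hEshow : (Real.log (Real.log (1 / s))) ^ 2 / Real.sqrt (Real.log (1 / s)) = qE L := by
    rw [hLdef]; rfl
  rw [hx0show, hEshow, Real.norm_eq_abs, Real.norm_eq_abs, abs_of_nonneg he0, one_mul]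
  exact hgoal
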